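/- arXiv:2304.00170 — 3 statements merged into one kernel-verified Lean document; each statement's English description precedes it below -/
import Mathlib

section
/- Let N ≥ 1 be an integer, τ ≥ 1 an integer, and r > 0 a real number with r ≠ 1. For i = 1, 2 let T_i be a row-stochastic real matrix indexed by {0, 1, ..., N} such that: T_i(m, m') = 0 whenever |m − m'| ≥ 2; T_i(0,0) = 1; T_i(N,N) = 1; and T_i(m, m−1) = T_i(m, m+1)/r for all 1 ≤ m ≤ N−1. Then the vector x defined by x(m) = (1 − r^{−m})/(1 − r^{−N}) satisfies (T_1)^τ · (T_2)^τ · x = x with x(0) = 0 and x(N) = 1. If moreover T_i(m, m+1) > 0 for all 1 ≤ m ≤ N−1 and i = 1, 2, then x is the unique vector satisfying (T_1)^τ (T_2)^τ x = x, x(0) = 0, x(N) = 1; in particular the fixation probability of a single mutant in the switching network equals the Moran value (1 − 1/r)/(1 − 1/r^N). -/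
private lemma switching_isothermal_arith (t u D r : ℝ) (hD : D ≠ 0) (hr : r ≠ 0) :
    t / r * ((1 - u * r) / D - (1 - u) / D) + t * ((1 - u * r⁻¹) / D - (1 - u) / D)
      + (1 - u) / D = (1 - u) / D := by
  field_simp
  ring


set_option maxHeartbeats 2000000 in
/-- Isothermal theorem for switching networks: if both transition matrices are tridiagonal,
row-stochastic, with absorbing states `0` and `N` and downward/upward ratio `1/r`, then the
Moran fixation vector is a fixed point of `T₁^τ * T₂^τ`, and (under positivity of the upward
transition probabilities) it is the unique such fixed point with the prescribed boundary
values; in particular the fixation probability of a single mutant equals the Moran value. -/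
theorem switching_isothermal (N τ : ℕ) (hN : 1 ≤ N) (hτ : 1 ≤ τ)
    (r : ℝ) (hr : 0 < r) (hr1 : r ≠ 1)
    (T₁ T₂ : Matrix (Fin (N + 1)) (Fin (N + 1)) ℝ)
    (hnn₁ : ∀ m m', 0 ≤ T₁ m m') (hrow₁ : ∀ m, ∑ m', T₁ m m' = 1)
    (hnn₂ : ∀ m m', 0 ≤ T₂ m m') (hrow₂ : ∀ m, ∑ m', T₂ m m' = 1)
    (htri₁ : ∀ m m' : Fin (N + 1), 2 ≤ ((m : ℤ) - (m' : ℤ)).natAbs → T₁ m m' = 0)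
    (htri₂ : ∀ m m' : Fin (N + 1), 2 ≤ ((m : ℤ) - (m' : ℤ)).natAbs → T₂ m m' = 0)
    (habs0₁ : T₁ 0 0 = 1) (habsN₁ : T₁ (Fin.last N) (Fin.last N) = 1)
    (habs0₂ : T₂ 0 0 = 1) (habsN₂ : T₂ (Fin.last N) (Fin.last N) = 1)
    (hratio₁ : ∀ m : ℕ, ∀ _h1 : 1 ≤ m, ∀ _h2 : m ≤ N - 1,
      T₁ ⟨m, by omega⟩ ⟨m - 1, by omega⟩ = T₁ ⟨m, by omega⟩ ⟨m + 1, by omega⟩ / r)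
    (hratio₂ : ∀ m : ℕ, ∀ _h1 : 1 ≤ m, ∀ _h2 : m ≤ N - 1,
      T₂ ⟨m, by omega⟩ ⟨m - 1, by omega⟩ = T₂ ⟨m, by omega⟩ ⟨m + 1, by omega⟩ / r) :
    ∀ x : Fin (N + 1) → ℝ,
      (∀ m : Fin (N + 1), x m = (1 - r ^ (-((m : ℕ) : ℤ))) / (1 - r ^ (-(N : ℤ)))) →
      (T₁ ^ τ * T₂ ^ τ).mulVec x = x ∧ x 0 = 0 ∧ x (Fin.last N) = 1 ∧
      x ⟨1, by omega⟩ = (1 - 1 / r) / (1 - 1 / r ^ N) ∧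
      ((∀ m : ℕ, ∀ _h1 : 1 ≤ m, ∀ _h2 : m ≤ N - 1,
          0 < T₁ ⟨m, by omega⟩ ⟨m + 1, by omega⟩ ∧ 0 < T₂ ⟨m, by omega⟩ ⟨m + 1, by omega⟩) →
        ∀ y : Fin (N + 1) → ℝ, (T₁ ^ τ * T₂ ^ τ).mulVec y = y →
          y 0 = 0 → y (Fin.last N) = 1 → y = x) := by
  intro x hx
  have hrne : r ≠ 0 := ne_of_gt hr
  have hrNne : r ^ (-(N : ℤ)) ≠ 1 := by
    intro h
    rcases lt_trichotomy r 1 with hlt | heq | hgt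
    · have h1 : r ^ N < 1 := pow_lt_one₀ (le_of_lt hr) hlt (by omega)
      rw [zpow_neg, zpow_natCast, inv_eq_one] at h
      exact absurd h (ne_of_lt h1)
    · exact hr1 heq
    · have h1 : 1 < r ^ N := one_lt_pow₀ hgt (by omega)
      rw [zpow_neg, zpow_natCast, inv_eq_one] at h
      exact absurd h (ne_of_gt h1)
  have hDne : 1 - r ^ (-(N : ℤ)) ≠ 0 := sub_ne_zero.mpr (Ne.symm hrNne)
  -- boundary values of x
  have hx0 : x 0 = 0 := by
    rw [hx 0]
    simp
  have hxN : x (Fin.last N) = 1 := by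
    rw [hx (Fin.last N)]
    simp only [Fin.val_last]
    exact div_self hDne
  -- absorbing rows: all off-diagonal entries vanish
  have habsrow : ∀ (T : Matrix (Fin (N + 1)) (Fin (N + 1)) ℝ),
      (∀ m m', 0 ≤ T m m') → (∀ m, ∑ m', T m m' = 1) →
      ∀ a : Fin (N + 1), T a a = 1 → ∀ j, j ≠ a → T a j = 0 := by
    intro T hnn hrow a ha j hj
    have hsplit : ∑ m', T a m' = T a a + ∑ m' ∈ Finset.univ \ {a}, T a m' :=
      Finset.sum_eq_add_sum_sdiff_singleton_of_mem (Finset.mem_univ a) _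
    have hzero : ∑ m' ∈ Finset.univ \ {a}, T a m' = 0 := by
      rw [hrow a, ha] at hsplit
      linarith
    have := (Finset.sum_eq_zero_iff_of_nonneg
      (fun i _ => hnn a i)).mp hzero j (by simp [hj])
    exact this
  -- each T with the given structure fixes x
  have hfixgen : ∀ (T : Matrix (Fin (N + 1)) (Fin (N + 1)) ℝ),
      (∀ m m', 0 ≤ T m m') → (∀ m, ∑ m', T m m' = 1) →
      (∀ m m' : Fin (N + 1), 2 ≤ ((m : ℤ) - (m' : ℤ)).natAbs → T m m' = 0) →
      T 0 0 = 1 → T (Fin.last N) (Fin.last N) = 1 →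
      (∀ m : ℕ, ∀ _h1 : 1 ≤ m, ∀ _h2 : m ≤ N - 1,
        T ⟨m, by omega⟩ ⟨m - 1, by omega⟩ = T ⟨m, by omega⟩ ⟨m + 1, by omega⟩ / r) →
      T.mulVec x = x := by
    intro T hnn hrow htri h0 hNN hratio
    funext m
    have hmv : (m : ℕ) ≤ N := by omega
    rcases Nat.eq_zero_or_pos (m : ℕ) with hm0 | hm1
    · -- m = 0
      have hm : m = 0 := Fin.ext hm0
      subst hm
      show ∑ j, T 0 j * x j = x 0
      rw [Finset.sum_eq_single 0 (fun b _ hb => by rw [habsrow T hnn hrow 0 h0 b hb, zero_mul])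
        (fun h => absurd (Finset.mem_univ _) h), h0, one_mul]
    · rcases Nat.lt_or_ge (m : ℕ) N with hmN | hmN
      · -- interior case
        have hm2 : (m : ℕ) ≤ N - 1 := by omega
        obtain ⟨mv, hmv1, hmv2, hmveq⟩ : ∃ mv : ℕ, 1 ≤ mv ∧ mv ≤ N - 1 ∧ (m : ℕ) = mv :=
          ⟨(m : ℕ), hm1, hm2, rfl⟩
        have hma : m = ⟨mv, by omega⟩ := Fin.ext hmveq
        obtain ⟨a, hav⟩ : ∃ a : Fin (N + 1), (a : ℕ) = mv - 1 := ⟨⟨mv - 1, by omega⟩, rfl⟩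
        obtain ⟨b, hbv⟩ : ∃ b : Fin (N + 1), (b : ℕ) = mv + 1 := ⟨⟨mv + 1, by omega⟩, rfl⟩
        have hab : a ≠ b := by
          intro h
          have := congrArg Fin.val h
          omega
        have hbin : b ∈ Finset.univ \ {a} := by simp [hab.symm]
        have key : ∑ j, T m j * (x j - x m)
            = T m a * (x a - x m) + T m b * (x b - x m) := by
          rw [Finset.sum_eq_add_sum_sdiff_singleton_of_mem (Finset.mem_univ a),
            Finset.sum_eq_add_sum_sdiff_singleton_of_mem hbin]
          have hrest : ∑ j ∈ (Finset.univ \ {a}) \ {b}, T m j * (x j - x m) = 0 := by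
            apply Finset.sum_eq_zero
            intro j hj
            simp only [Finset.mem_sdiff, Finset.mem_singleton] at hj
            rcases eq_or_ne (j : ℕ) mv with hjm | hjm
            · have : j = m := Fin.ext (by omega)
              rw [this, sub_self, mul_zero]
            · have hja : (j : ℕ) ≠ mv - 1 := fun h => hj.1.2 (Fin.ext (by omega))
              have hjb : (j : ℕ) ≠ mv + 1 := fun h => hj.2 (Fin.ext (by omega))
              rw [htri m j (by omega), zero_mul]
          rw [hrest, add_zero]
        have hsum : ∑ j, T m j * x j
            = (∑ j, T m j * (x j - x m)) + (∑ j, T m j) * x m := by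
          rw [Finset.sum_mul, ← Finset.sum_add_distrib]
          exact Finset.sum_congr rfl fun j _ => by ring
        show ∑ j, T m j * x j = x m
        rw [hsum, key, hrow m, one_mul]
        -- arithmetic for the two remaining terms
        have ha' : a = ⟨mv - 1, by omega⟩ := Fin.ext hav
        have hb' : b = ⟨mv + 1, by omega⟩ := Fin.ext hbv
        have hrat : T m a = T m b / r := by
          rw [hma, ha', hb']; exact hratio mv hmv1 hmv2
        have e1 : r ^ (-((mv - 1 : ℕ) : ℤ)) = r ^ (-(mv : ℤ)) * r := by
          have h : (-((mv - 1 : ℕ) : ℤ)) = -(mv : ℤ) + 1 := by omega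
          rw [h, zpow_add₀ hrne, zpow_one]
        have e2 : r ^ (-((mv + 1 : ℕ) : ℤ)) = r ^ (-(mv : ℤ)) * r⁻¹ := by
          have h : (-((mv + 1 : ℕ) : ℤ)) = -(mv : ℤ) + (-1) := by omega
          rw [h, zpow_add₀ hrne, zpow_neg_one]
        have hxa : x a = (1 - r ^ (-(mv : ℤ)) * r) / (1 - r ^ (-(N : ℤ))) := by
          rw [hx a, hav, e1]
        have hxb : x b = (1 - r ^ (-(mv : ℤ)) * r⁻¹) / (1 - r ^ (-(N : ℤ))) := by
          rw [hx b, hbv, e2]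
        have hxm : x m = (1 - r ^ (-(mv : ℤ))) / (1 - r ^ (-(N : ℤ))) := by
          rw [hx m, hmveq]
        rw [hrat, hxa, hxb, hxm]
        exact switching_isothermal_arith (T m b) (r ^ (-(mv : ℤ))) (1 - r ^ (-(N : ℤ))) r
          hDne hrne
      · -- m = last
        have hm : m = Fin.last N := Fin.ext (by simp [Fin.val_last]; omega)
        subst hm
        show ∑ j, T (Fin.last N) j * x j = x (Fin.last N)
        rw [Finset.sum_eq_single (Fin.last N)
          (fun c _ hc => by rw [habsrow T hnn hrow (Fin.last N) hNN c hc, zero_mul])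
          (fun h => absurd (Finset.mem_univ _) h), hNN, one_mul]
  have hfix₁ : T₁.mulVec x = x := hfixgen T₁ hnn₁ hrow₁ htri₁ habs0₁ habsN₁ hratio₁
  have hfix₂ : T₂.mulVec x = x := hfixgen T₂ hnn₂ hrow₂ htri₂ habs0₂ habsN₂ hratio₂
  -- powers preserve fixed vectors
  have powfix : ∀ (A : Matrix (Fin (N + 1)) (Fin (N + 1)) ℝ) (v : Fin (N + 1) → ℝ),
      A.mulVec v = v → ∀ k, (A ^ k).mulVec v = v := by
    intro A v h k
    induction k with
    | zero => simp [Matrix.one_mulVec]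
    | succ k ih => rw [pow_succ', ← Matrix.mulVec_mulVec, ih, h]
  have hPx : (T₁ ^ τ * T₂ ^ τ).mulVec x = x := by
    rw [← Matrix.mulVec_mulVec, powfix T₂ x hfix₂ τ, powfix T₁ x hfix₁ τ]
  have hx1 : x ⟨1, by omega⟩ = (1 - 1 / r) / (1 - 1 / r ^ N) := by
    rw [hx ⟨1, by omega⟩]
    norm_num [zpow_neg, zpow_natCast, one_div]
  refine ⟨hPx, hx0, hxN, hx1, ?_⟩
  -- uniqueness
  intro hpos y hyfix hy0 hyN
  set P := T₁ ^ τ * T₂ ^ τ with hPdef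
  -- nonnegativity closure
  have mulnn : ∀ (A B : Matrix (Fin (N + 1)) (Fin (N + 1)) ℝ),
      (∀ i j, 0 ≤ A i j) → (∀ i j, 0 ≤ B i j) → ∀ i j, 0 ≤ (A * B) i j := by
    intro A B hA hB i j
    rw [Matrix.mul_apply]
    exact Finset.sum_nonneg fun k _ => mul_nonneg (hA i k) (hB k j)
  have pownn : ∀ (A : Matrix (Fin (N + 1)) (Fin (N + 1)) ℝ),
      (∀ i j, 0 ≤ A i j) → ∀ k, ∀ i j, 0 ≤ (A ^ k) i j := by
    intro A hA k
    induction k with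
    | zero =>
      intro i j
      rw [pow_zero, Matrix.one_apply]
      split <;> norm_num
    | succ k ih =>
      rw [pow_succ']
      exact mulnn A (A ^ k) hA ih
  -- row sums closure
  have mulrow : ∀ (A B : Matrix (Fin (N + 1)) (Fin (N + 1)) ℝ),
      (∀ i, ∑ j, A i j = 1) → (∀ i, ∑ j, B i j = 1) → ∀ i, ∑ j, (A * B) i j = 1 := by
    intro A B hA hB i
    simp only [Matrix.mul_apply]
    rw [Finset.sum_comm]
    calc ∑ k, ∑ j, A i k * B k j = ∑ k, A i k * ∑ j, B k j := by
          exact Finset.sum_congr rfl fun k _ => (Finset.mul_sum _ _ _).symm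
      _ = ∑ k, A i k := by
          exact Finset.sum_congr rfl fun k _ => by rw [hB k, mul_one]
      _ = 1 := hA i
  have powrow : ∀ (A : Matrix (Fin (N + 1)) (Fin (N + 1)) ℝ),
      (∀ i, ∑ j, A i j = 1) → ∀ k, ∀ i, ∑ j, (A ^ k) i j = 1 := by
    intro A hA k
    induction k with
    | zero => intro i; simp [pow_zero, Matrix.one_apply, Finset.sum_ite_eq']
    | succ k ih =>
      rw [pow_succ']
      exact mulrow A (A ^ k) hA ih
  have hPnn : ∀ i j, 0 ≤ P i j := mulnn _ _ (pownn T₁ hnn₁ τ) (pownn T₂ hnn₂ τ)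
  have hProw : ∀ i, ∑ j, P i j = 1 := mulrow _ _ (powrow T₁ hrow₁ τ) (powrow T₂ hrow₂ τ)
  -- a single structured step extends reachability of 0
  have step : ∀ (T : Matrix (Fin (N + 1)) (Fin (N + 1)) ℝ),
      (∀ m m', 0 ≤ T m m') → T 0 0 = 1 →
      (∀ mv : ℕ, ∀ h1 : 1 ≤ mv, ∀ h2 : mv ≤ N - 1, 0 < T ⟨mv, by omega⟩ ⟨mv - 1, by omega⟩) →
      ∀ (A : Matrix (Fin (N + 1)) (Fin (N + 1)) ℝ), (∀ i j, 0 ≤ A i j) → ∀ k : ℕ,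
      (∀ m : Fin (N + 1), (m : ℕ) ≤ N - 1 → (m : ℕ) ≤ k → 0 < A m 0) →
      (∀ m : Fin (N + 1), (m : ℕ) ≤ N - 1 → (m : ℕ) ≤ k + 1 → 0 < (T * A) m 0) := by
    intro T hTnn hT0 hTdown A hAnn k hreach m h1 h2
    rw [Matrix.mul_apply]
    rcases Nat.eq_zero_or_pos (m : ℕ) with hm0 | hm1
    · have hm : m = 0 := Fin.ext hm0
      subst hm
      have hterm : 0 < T 0 0 * A 0 0 := by
        rw [hT0, one_mul]
        exact hreach 0 (by simp) (by simp)
      exact lt_of_lt_of_le hterm (Finset.single_le_sum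
        (fun i _ => mul_nonneg (hTnn 0 i) (hAnn i 0)) (Finset.mem_univ 0))
    · set mv := (m : ℕ) with hmvdef
      have hma : m = ⟨mv, by omega⟩ := Fin.ext rfl
      set a : Fin (N + 1) := ⟨mv - 1, by omega⟩ with hadef
      have hterm : 0 < T m a * A a 0 := by
        apply mul_pos
        · rw [hma]; exact hTdown mv hm1 h1
        · exact hreach a (by simp [hadef]; omega) (by simp [hadef]; omega)
      exact lt_of_lt_of_le hterm (Finset.single_le_sum
        (fun i _ => mul_nonneg (hTnn m i) (hAnn i 0)) (Finset.mem_univ a))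
  -- iterate the step over a power of T
  have steppow : ∀ (T : Matrix (Fin (N + 1)) (Fin (N + 1)) ℝ),
      (∀ m m', 0 ≤ T m m') → T 0 0 = 1 →
      (∀ mv : ℕ, ∀ h1 : 1 ≤ mv, ∀ h2 : mv ≤ N - 1, 0 < T ⟨mv, by omega⟩ ⟨mv - 1, by omega⟩) →
      ∀ (A : Matrix (Fin (N + 1)) (Fin (N + 1)) ℝ), (∀ i j, 0 ≤ A i j) → ∀ k : ℕ,
      (∀ m : Fin (N + 1), (m : ℕ) ≤ N - 1 → (m : ℕ) ≤ k → 0 < A m 0) →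
      ∀ j : ℕ, (∀ m : Fin (N + 1), (m : ℕ) ≤ N - 1 → (m : ℕ) ≤ k + j → 0 < (T ^ j * A) m 0) := by
    intro T hTnn hT0 hTdown A hAnn k hreach j
    induction j with
    | zero => simpa [pow_zero, one_mul] using hreach
    | succ j ih =>
      have hnnj : ∀ i l, 0 ≤ (T ^ j * A) i l := mulnn _ _ (pownn T hTnn j) hAnn
      have := step T hTnn hT0 hTdown (T ^ j * A) hnnj (k + j) ih
      intro m hm1 hm2
      have h := this m hm1 (by omega)
      rw [pow_succ', mul_assoc]
      exact h
  -- downward positivity for T₁ and T₂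
  have hdown₁ : ∀ mv : ℕ, ∀ h1 : 1 ≤ mv, ∀ h2 : mv ≤ N - 1,
      0 < T₁ ⟨mv, by omega⟩ ⟨mv - 1, by omega⟩ := by
    intro mv h1 h2
    rw [hratio₁ mv h1 h2]
    exact div_pos (hpos mv h1 h2).1 hr
  have hdown₂ : ∀ mv : ℕ, ∀ h1 : 1 ≤ mv, ∀ h2 : mv ≤ N - 1,
      0 < T₂ ⟨mv, by omega⟩ ⟨mv - 1, by omega⟩ := by
    intro mv h1 h2
    rw [hratio₂ mv h1 h2]
    exact div_pos (hpos mv h1 h2).2 hr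
  -- reachability of 0 for powers of P
  have reachP : ∀ k : ℕ, ∀ m : Fin (N + 1), (m : ℕ) ≤ N - 1 → (m : ℕ) ≤ k →
      0 < (P ^ k) m 0 := by
    intro k
    induction k with
    | zero =>
      intro m hm1 hm2
      have hm : m = 0 := Fin.ext (by simp only [Fin.val_zero]; omega)
      subst hm
      simp [pow_zero, Matrix.one_apply_eq]
    | succ k ih =>
      have hPknn : ∀ i j, 0 ≤ (P ^ k) i j := pownn P hPnn k
      have s2 := steppow T₂ hnn₂ habs0₂ hdown₂ (P ^ k) hPknn k ih τ
      have hnn2 : ∀ i j, 0 ≤ (T₂ ^ τ * P ^ k) i j := mulnn _ _ (pownn T₂ hnn₂ τ) hPknn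
      have s1 := steppow T₁ hnn₁ habs0₁ hdown₁ (T₂ ^ τ * P ^ k) hnn2 (k + τ) s2 τ
      intro m hm1 hm2
      have h := s1 m hm1 (by omega)
      rw [pow_succ' P k, hPdef, mul_assoc]
      exact h
  have hQnn : ∀ i j, 0 ≤ (P ^ N) i j := pownn P hPnn N
  have hQrow : ∀ i, ∑ j, (P ^ N) i j = 1 := powrow P hProw N
  have hQreach : ∀ m : Fin (N + 1), (m : ℕ) ≤ N - 1 → 0 < (P ^ N) m 0 :=
    fun m h => reachP N m h (by omega)
  -- maximum principle: any fixed vector of P^N vanishing at both ends is ≤ 0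
  have maxle : ∀ v : Fin (N + 1) → ℝ, (P ^ N).mulVec v = v →
      v 0 = 0 → v (Fin.last N) = 0 → ∀ m, v m ≤ 0 := by
    intro v hv hv0 hvN m
    by_contra hcon
    push_neg at hcon
    obtain ⟨m₀, -, hmax⟩ := Finset.exists_max_image Finset.univ v ⟨0, Finset.mem_univ 0⟩
    have hM : 0 < v m₀ := lt_of_lt_of_le hcon (hmax m (Finset.mem_univ m))
    have hint : (m₀ : ℕ) ≤ N - 1 := by
      by_contra hI
      have hval : (m₀ : ℕ) = N := by have := m₀.isLt; omega
      have : m₀ = Fin.last N := Fin.ext (by simp [Fin.val_last, hval])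
      rw [this, hvN] at hM
      exact lt_irrefl 0 hM
    have hq : 0 < (P ^ N) m₀ 0 := hQreach m₀ hint
    have hvm : v m₀ = ∑ j, (P ^ N) m₀ j * v j := by
      have := congrFun hv m₀
      rw [Matrix.mulVec, dotProduct] at this
      exact this.symm
    have hrow0 : ∑ j ∈ Finset.univ \ {(0 : Fin (N + 1))}, (P ^ N) m₀ j
        = 1 - (P ^ N) m₀ 0 := by
      have := Finset.sum_eq_add_sum_sdiff_singleton_of_mem (Finset.mem_univ (0 : Fin (N + 1)))
        (fun j => (P ^ N) m₀ j)
      rw [hQrow m₀] at this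
      linarith
    have hbound : v m₀ ≤ (1 - (P ^ N) m₀ 0) * v m₀ := by
      calc v m₀ = ∑ j, (P ^ N) m₀ j * v j := hvm
        _ = (P ^ N) m₀ 0 * v 0 + ∑ j ∈ Finset.univ \ {(0 : Fin (N + 1))},
              (P ^ N) m₀ j * v j :=
            Finset.sum_eq_add_sum_sdiff_singleton_of_mem (Finset.mem_univ _) _
        _ = ∑ j ∈ Finset.univ \ {(0 : Fin (N + 1))}, (P ^ N) m₀ j * v j := by
            rw [hv0, mul_zero, zero_add]
        _ ≤ ∑ j ∈ Finset.univ \ {(0 : Fin (N + 1))}, (P ^ N) m₀ j * v m₀ :=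
            Finset.sum_le_sum fun j _ =>
              mul_le_mul_of_nonneg_left (hmax j (Finset.mem_univ j)) (hQnn m₀ j)
        _ = (1 - (P ^ N) m₀ 0) * v m₀ := by rw [← Finset.sum_mul, hrow0]
    nlinarith [mul_pos hq hM]
  -- apply to y - x and x - y
  have hQfix : ∀ v : Fin (N + 1) → ℝ, P.mulVec v = v → (P ^ N).mulVec v = v :=
    fun v h => powfix P v h N
  have hPyx : P.mulVec (y - x) = y - x := by
    rw [Matrix.mulVec_sub, hyfix, hPx]
  have hPxy : P.mulVec (x - y) = x - y := by
    rw [Matrix.mulVec_sub, hyfix, hPx]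
  have h1 := maxle (y - x) (hQfix _ hPyx)
    (by simp [Pi.sub_apply, hy0, hx0]) (by simp [Pi.sub_apply, hyN, hxN])
  have h2 := maxle (x - y) (hQfix _ hPxy)
    (by simp [Pi.sub_apply, hy0, hx0]) (by simp [Pi.sub_apply, hyN, hxN])
  funext m
  have := h1 m
  have := h2 m
  simp only [Pi.sub_apply] at *
  linarith
end

section
/- Let N ≥ 2 and let A_1, A_2 be symmetric N×N real matrices with nonnegative entries, zero diagonal, positive weighted degrees, and connected underlying graphs (for each A_i, the graph with an edge between u and v whenever A_i(u,v) > 0 is connected). Let T_1 = T(A_1, 1) and T_2 = T(A_2, 1) be the birth-death transition matrices at fitness r = 1, and let τ ≥ 1. If x : ({0,1}^N) → ℝ satisfies x(0,...,0) = 0, x(1,...,1) = 1, and x = (T_1)^τ (T_2)^τ x, then Σ_{i=1}^{N} x(e_i) = 1, where e_i denotes the state with a mutant at node i only. Consequently, the fixation probability ρ = (1/N) Σ_{i=1}^{N} x(e_i) of a single mutant placed on a uniformly random node equals 1/N. -/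
/-- Number of mutant nodes in state `s`. -/
def mCount {N : ℕ} (s : Fin N → Bool) : ℕ :=
  (Finset.univ.filter (fun v => s v = true)).card

/-- Weighted degree (strength) of node `u` in the weighted network `A`. -/
def wdeg {N : ℕ} (A : Matrix (Fin N) (Fin N) ℝ) (u : Fin N) : ℝ := ∑ v, A u v

/-- Off-diagonal entries of the birth-death transition matrix: nonzero only between states
differing at exactly one node `v`; the value depends on whether the mutant set gains or
loses node `v`. -/
noncomputable def bdOff {N : ℕ} (A : Matrix (Fin N) (Fin N) ℝ) (r : ℝ)
    (s s' : Fin N → Bool) : ℝ :=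
  if h : ∃ v : Fin N, s v ≠ s' v ∧ ∀ u : Fin N, u ≠ v → s u = s' u then
    if s h.choose = false then
      (r / (r * (mCount s : ℝ) + ((N : ℝ) - (mCount s : ℝ)))) *
        ∑ u ∈ Finset.univ.filter (fun u => s u = true), A u h.choose / wdeg A u
    else
      (1 / (r * (mCount s : ℝ) + ((N : ℝ) - (mCount s : ℝ)))) *
        ∑ u ∈ Finset.univ.filter (fun u => s u = false), A u h.choose / wdeg A u
  else 0

/-- The birth-death transition matrix `T(A, r)` on the state space `{0,1}^N`:
diagonal entries make every row sum to `1`. -/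
noncomputable def bdT {N : ℕ} (A : Matrix (Fin N) (Fin N) ℝ) (r : ℝ) :
    Matrix (Fin N → Bool) (Fin N → Bool) ℝ :=
  fun s s' =>
    if s' = s then 1 - ∑ t : Fin N → Bool, bdOff A r s t else bdOff A r s s'

/-- The underlying graph of the weight matrix `A`: nodes `u ≠ v` are adjacent whenever the
edge weight between them is positive. -/
def uGraph {N : ℕ} (A : Matrix (Fin N) (Fin N) ℝ) : SimpleGraph (Fin N) where
  Adj u v := u ≠ v ∧ 0 < A u v ∧ 0 < A v u
  symm := ⟨fun _u _v h => ⟨h.1.symm, h.2.2, h.2.1⟩⟩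
  loopless := ⟨fun _u h => h.1 rfl⟩

/-! ### auxiliary development -/

/-- generic one-step averaging operator -/
noncomputable def ndStep {N : ℕ} {α : Type} (A : Matrix (Fin N) (Fin N) ℝ)
    (f : (Fin N → α) → ℝ) (c : Fin N → α) : ℝ :=
  (1 / (N : ℝ)) * ∑ u, ∑ v, (A u v / wdeg A u) * f (Function.update c v (c u))

section aux
variable {N : ℕ} {α : Type} (A : Matrix (Fin N) (Fin N) ℝ)

lemma nd_rowsum (u : Fin N) (hdeg : 0 < wdeg A u) :
    ∑ v, A u v / wdeg A u = 1 := by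
  rw [← Finset.sum_div]
  exact div_self (ne_of_gt hdeg)

lemma ndStep_const (hN : 0 < N) (hdeg : ∀ u, 0 < wdeg A u) (b : ℝ) (c : Fin N → α) :
    ndStep A (fun _ => b) c = b := by
  have h1 : ∀ u : Fin N, ∑ v, (A u v / wdeg A u) * b = b := fun u => by
    rw [← Finset.sum_mul, nd_rowsum A u (hdeg u), one_mul]
  rw [ndStep, Finset.sum_congr rfl (fun u _ => h1 u), Finset.sum_const]
  simp only [Finset.card_univ, Fintype.card_fin, nsmul_eq_mul]
  have : (N:ℝ) ≠ 0 := Nat.cast_ne_zero.2 hN.ne'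
  field_simp

lemma ndStep_le (hN : 0 < N) (hnn : ∀ u v, 0 ≤ A u v) (hdeg : ∀ u, 0 < wdeg A u)
    {f : (Fin N → α) → ℝ} {M : ℝ} (hf : ∀ d, f d ≤ M) (c : Fin N → α) :
    ndStep A f c ≤ M := by
  have h1 : ndStep A (fun _ => M) c = M := ndStep_const A hN hdeg M c
  rw [← h1, ndStep, ndStep]
  have hNpos : (0:ℝ) < N := by exact_mod_cast hN
  apply mul_le_mul_of_nonneg_left _ (by positivity)
  apply Finset.sum_le_sum; intro u _
  apply Finset.sum_le_sum; intro v _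
  exact mul_le_mul_of_nonneg_left (hf _) (div_nonneg (hnn u v) (hdeg u).le)

lemma ndStep_iter_le (hN : 0 < N) (hnn : ∀ u v, 0 ≤ A u v) (hdeg : ∀ u, 0 < wdeg A u)
    {f : (Fin N → α) → ℝ} {M : ℝ} (hf : ∀ d, f d ≤ M) (k : ℕ) (c : Fin N → α) :
    (ndStep A)^[k] f c ≤ M := by
  induction k generalizing c f hf with
  | zero => exact hf c
  | succ k ih =>
      rw [Function.iterate_succ_apply]
      exact ih (fun d => ndStep_le A hN hnn hdeg hf d) c

/-- equality propagation through one averaging step -/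
lemma ndStep_eq_prop (hN : 0 < N) (hnn : ∀ u v, 0 ≤ A u v) (hdeg : ∀ u, 0 < wdeg A u)
    {f : (Fin N → α) → ℝ} {M : ℝ} (hf : ∀ d, f d ≤ M) {c : Fin N → α}
    (hc : ndStep A f c = M) {u v : Fin N} (huv : 0 < A u v) :
    f (Function.update c v (c u)) = M := by
  have hNpos : (0:ℝ) < N := by exact_mod_cast hN
  have key : ∑ u, ∑ v, (A u v / wdeg A u) *
      (M - f (Function.update c v (c u))) = 0 := by
    have h1 : ndStep A (fun _ => M) c = M := ndStep_const A hN hdeg M c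
    simp only [ndStep] at h1 hc
    have h2 := sub_eq_zero.2 (h1.trans hc.symm)
    rw [← mul_sub] at h2
    simp only [← Finset.sum_sub_distrib, ← mul_sub] at h2
    rcases mul_eq_zero.1 h2 with h | h
    · exact absurd h (by positivity)
    · exact h
  have hnonneg : ∀ u v : Fin N,
      0 ≤ (A u v / wdeg A u) * (M - f (Function.update c v (c u))) := fun u v =>
    mul_nonneg (div_nonneg (hnn u v) (hdeg u).le) (sub_nonneg.2 (hf _))
  have houter := (Finset.sum_eq_zero_iff_of_nonneg
    (fun u _ => Finset.sum_nonneg (fun v _ => hnonneg u v))).1 key u (Finset.mem_univ u)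
  have hinner := (Finset.sum_eq_zero_iff_of_nonneg
    (fun v _ => hnonneg u v)).1 houter v (Finset.mem_univ v)
  have hp : (0:ℝ) < A u v / wdeg A u := div_pos huv (hdeg u)
  have := (mul_eq_zero.1 hinner).resolve_left hp.ne'
  linarith

lemma ndStep_neg (f : (Fin N → α) → ℝ) :
    ndStep A (fun c => - f c) = fun c => - ndStep A f c := by
  funext c
  simp [ndStep, mul_neg, Finset.sum_neg]

end aux

section flipsec
variable {N : ℕ} (A : Matrix (Fin N) (Fin N) ℝ)

def ndFlip (s : Fin N → Bool) (v : Fin N) : Fin N → Bool := Function.update s v (!(s v))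

lemma ndFlip_apply_self (s : Fin N → Bool) (v : Fin N) : ndFlip s v v = !(s v) :=
  Function.update_self v _ s

lemma ndFlip_apply_ne (s : Fin N → Bool) {v w : Fin N} (h : w ≠ v) : ndFlip s v w = s w :=
  Function.update_of_ne h _ s

lemma ndFlip_ne (s : Fin N → Bool) (v : Fin N) : ndFlip s v ≠ s := by
  intro h
  have := congrFun h v
  rw [ndFlip_apply_self] at this
  simp at this

lemma ndFlip_inj (s : Fin N → Bool) : Function.Injective (ndFlip s) := by
  intro v w h
  by_contra hvw
  have h1 := congrFun h v
  rw [ndFlip_apply_self, ndFlip_apply_ne s hvw] at h1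
  simp at h1

lemma bdOff_self (r : ℝ) (s : Fin N → Bool) : bdOff A r s s = 0 := by
  rw [bdOff, dif_neg]
  rintro ⟨v, hv, -⟩
  exact hv rfl

lemma bdOff_eq_zero (r : ℝ) {s t : Fin N → Bool} (h : ∀ v, t ≠ ndFlip s v) :
    bdOff A r s t = 0 := by
  rw [bdOff, dif_neg]
  rintro ⟨v, hv, hall⟩
  apply h v
  funext w
  by_cases hw : w = v
  · subst hw
    rw [ndFlip_apply_self]
    revert hv; cases s w <;> cases t w <;> simp
  · rw [ndFlip_apply_ne s hw]
    exact (hall w hw).symm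

lemma bdOff_flip (s : Fin N → Bool) (v : Fin N) :
    bdOff A 1 s (ndFlip s v) =
      (1/(N:ℝ)) * ∑ u ∈ Finset.univ.filter (fun u => s u = !(s v)), A u v / wdeg A u := by
  have hex : ∃ w, s w ≠ ndFlip s v w ∧ ∀ u, u ≠ w → s u = ndFlip s v u :=
    ⟨v, by rw [ndFlip_apply_self]; cases s v <;> simp,
      fun u hu => (ndFlip_apply_ne s hu).symm⟩
  rw [bdOff, dif_pos hex]
  have hch : hex.choose = v := by
    by_contra hvw
    have h1 := hex.choose_spec.1
    rw [ndFlip_apply_ne s hvw] at h1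
    exact h1 rfl
  rw [hch]
  have hden : 1 * (mCount s : ℝ) + ((N : ℝ) - (mCount s : ℝ)) = (N:ℝ) := by ring
  rw [hden]
  cases hsv : s v with
  | false => rw [if_pos rfl, Bool.not_false]
  | true => rw [if_neg (by decide), Bool.not_true]

end flipsec


section L1
variable {N : ℕ} (A : Matrix (Fin N) (Fin N) ℝ)

lemma bool_ne_iff (a b : Bool) : (¬ a = b) ↔ (a = !b) := by cases a <;> cases b <;> simp

lemma bdT_mulVec (hN : 0 < N) (hdeg : ∀ u, 0 < wdeg A u)
    (x : (Fin N → Bool) → ℝ) (s : Fin N → Bool) :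
    (bdT A 1).mulVec x s = ndStep A x s := by
  classical
  have hNR : (0:ℝ) < N := by exact_mod_cast hN
  set β : Fin N → ℝ := fun v => bdOff A 1 s (ndFlip s v) with hβdef
  have hβ : ∀ v, β v = (1/(N:ℝ)) *
      ∑ u ∈ Finset.univ.filter (fun u => s u = !(s v)), A u v / wdeg A u :=
    fun v => bdOff_flip A s v
  have hre : ∀ g : (Fin N → Bool) → ℝ,
      ∑ t : Fin N → Bool, bdOff A 1 s t * g t = ∑ v, β v * g (ndFlip s v) := by
    intro g
    have h0 : ∀ t ∈ (Finset.univ : Finset (Fin N → Bool)),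
        t ∉ Finset.univ.image (ndFlip s) → bdOff A 1 s t * g t = 0 := by
      intro t _ ht
      rw [bdOff_eq_zero A 1 (fun v hv =>
        ht (by rw [hv]; exact Finset.mem_image_of_mem _ (Finset.mem_univ v))), zero_mul]
    rw [← Finset.sum_subset (Finset.subset_univ _) h0,
      Finset.sum_image (fun a _ b _ h => ndFlip_inj s h)]
  have hdiagT : bdT A 1 s s = 1 - ∑ v, β v := by
    have h1 := hre (fun _ => 1)
    simp only [mul_one] at h1
    show (if s = s then 1 - ∑ t : Fin N → Bool, bdOff A 1 s t else bdOff A 1 s s) = _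
    rw [if_pos rfl, h1]
  have hexp : (bdT A 1).mulVec x s
      = bdT A 1 s s * x s + ∑ t ∈ Finset.univ.erase s, bdOff A 1 s t * x t := by
    show ∑ t : Fin N → Bool, bdT A 1 s t * x t = _
    rw [← Finset.add_sum_erase _ _ (Finset.mem_univ s)]
    congr 1
    apply Finset.sum_congr rfl
    intro t ht
    show (if t = s then _ else bdOff A 1 s t) * x t = _
    rw [if_neg (Finset.ne_of_mem_erase ht)]
  have herase : ∑ t ∈ Finset.univ.erase s, bdOff A 1 s t * x t
      = ∑ v, β v * x (ndFlip s v) := by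
    rw [Finset.sum_erase _ (by rw [bdOff_self, zero_mul])]
    exact hre x
  rw [hexp, herase, hdiagT]
  have hfin : (1 - ∑ v, β v) * x s + ∑ v, β v * x (ndFlip s v)
      = x s + ∑ v, β v * (x (ndFlip s v) - x s) := by
    rw [Finset.sum_congr rfl (fun v (_ : v ∈ Finset.univ) => mul_sub (β v) _ (x s)),
      Finset.sum_sub_distrib, ← Finset.sum_mul]
    ring
  rw [hfin]
  -- now compute ndStep
  have hterm : ∀ u v : Fin N, x (Function.update s v (s u))
      = if s u = s v then x s else x (ndFlip s v) := by
    intro u v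
    by_cases h : s u = s v
    · rw [if_pos h, h, Function.update_eq_self]
    · rw [if_neg h]
      congr 1
      funext w
      by_cases hw : w = v
      · subst hw
        rw [Function.update_self, ndFlip_apply_self, (bool_ne_iff _ _).1 h]
      · rw [Function.update_of_ne hw, ndFlip_apply_ne s hw]
  have hsplit : ∀ u v : Fin N,
      (A u v / wdeg A u) * (if s u = s v then x s else x (ndFlip s v))
      = (A u v / wdeg A u) * x s +
        (if s u = s v then 0 else (A u v / wdeg A u) * (x (ndFlip s v) - x s)) := by
    intro u v
    by_cases h : s u = s v
    · rw [if_pos h, if_pos h, add_zero]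
    · rw [if_neg h, if_neg h]; ring
  have hrow : ∑ u : Fin N, ∑ v : Fin N, (A u v / wdeg A u) * x s = (N:ℝ) * x s := by
    have h1 : ∀ u : Fin N, ∑ v, (A u v / wdeg A u) * x s = x s := fun u => by
      rw [← Finset.sum_mul, nd_rowsum A u (hdeg u), one_mul]
    rw [Finset.sum_congr rfl (fun u _ => h1 u), Finset.sum_const, Finset.card_univ,
      Fintype.card_fin, nsmul_eq_mul]
  have hcol : ∀ v : Fin N,
      ∑ u, (if s u = s v then 0 else (A u v / wdeg A u) * (x (ndFlip s v) - x s))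
      = (N:ℝ) * (β v * (x (ndFlip s v) - x s)) := by
    intro v
    rw [Finset.sum_ite, Finset.sum_const_zero, zero_add, ← Finset.sum_mul]
    have hfe : Finset.univ.filter (fun u => ¬ (s u = s v))
        = Finset.univ.filter (fun u => s u = !(s v)) :=
      Finset.filter_congr (fun u _ => bool_ne_iff _ _)
    rw [hfe, hβ v]
    field_simp
  have hcomp : ndStep A x s = (1/(N:ℝ)) *
      ((N:ℝ) * x s + ∑ v, (N:ℝ) * (β v * (x (ndFlip s v) - x s))) := by
    rw [ndStep,
      Finset.sum_congr rfl (fun u (_ : u ∈ Finset.univ) =>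
        Finset.sum_congr rfl (fun v (_ : v ∈ Finset.univ) => by rw [hterm u v, hsplit u v])),
      Finset.sum_congr rfl (fun u (_ : u ∈ Finset.univ) => Finset.sum_add_distrib),
      Finset.sum_add_distrib, hrow, Finset.sum_comm,
      Finset.sum_congr rfl (fun v (_ : v ∈ Finset.univ) => hcol v)]
  rw [hcomp, mul_add, ← Finset.mul_sum, ← mul_assoc, ← mul_assoc, one_div,
    inv_mul_cancel₀ (ne_of_gt hNR), one_mul, one_mul]

end L1

section lift
variable {N : ℕ} (A : Matrix (Fin N) (Fin N) ℝ)

def ndPi (i : Fin N) (c : Fin N → Fin N) : Fin N → Bool := fun v => decide (c v = i)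

noncomputable def ndLift (y : (Fin N → Bool) → ℝ) (c : Fin N → Fin N) : ℝ :=
  ∑ i, y (ndPi i c)

lemma ndPi_update (i : Fin N) (c : Fin N → Fin N) (u v : Fin N) :
    ndPi i (Function.update c v (c u)) = Function.update (ndPi i c) v (ndPi i c u) := by
  funext w
  simp only [ndPi, Function.update_apply]
  split_ifs <;> rfl

lemma ndStep_lift (y : (Fin N → Bool) → ℝ) :
    ndStep A (ndLift y) = ndLift (ndStep A y) := by
  funext c
  simp only [ndStep, ndLift, ndPi_update, Finset.mul_sum]
  rw [Finset.sum_congr rfl (fun u (_ : u ∈ Finset.univ) => Finset.sum_comm), Finset.sum_comm]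

lemma ndIter_lift (y : (Fin N → Bool) → ℝ) (k : ℕ) :
    (ndStep A)^[k] (ndLift y) = ndLift ((ndStep A)^[k] y) := by
  induction k with
  | zero => rfl
  | succ k ih =>
      rw [Function.iterate_succ_apply', Function.iterate_succ_apply', ih, ndStep_lift]

lemma ndIter_neg (f : (Fin N → Fin N) → ℝ) (k : ℕ) :
    (ndStep A)^[k] (fun c => - f c) = fun c => - (ndStep A)^[k] f c := by
  induction k with
  | zero => rfl
  | succ k ih =>
      rw [Function.iterate_succ_apply', Function.iterate_succ_apply', ih]
      exact ndStep_neg A _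

lemma pow_mulVec {S : Type} [Fintype S] [DecidableEq S] (M : Matrix S S ℝ) (k : ℕ)
    (x : S → ℝ) : (M ^ k).mulVec x = (fun y => M.mulVec y)^[k] x := by
  induction k generalizing x with
  | zero => simp
  | succ k ih =>
      rw [pow_succ, ← Matrix.mulVec_mulVec, ih, Function.iterate_succ_apply]

end lift

section graph
variable {N : ℕ} {A : Matrix (Fin N) (Fin N) ℝ}

lemma walk_cross {V : Type} {G : SimpleGraph V} (P : V → Prop) :
    ∀ {a b : V}, G.Walk a b → P a → ¬ P b → ∃ u v, G.Adj u v ∧ P u ∧ ¬ P v := by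
  intro a b w
  induction w with
  | nil => intro h h'; exact absurd h h'
  | @cons u v b' h p ih =>
      intro ha hb
      by_cases hv : P v
      · exact ih hv hb
      · exact ⟨u, v, h, ha, hv⟩

lemma nd_cross (hconn : (uGraph A).Connected) {P : Fin N → Prop} {a b : Fin N}
    (ha : P a) (hb : ¬ P b) : ∃ u v, P u ∧ ¬ P v ∧ 0 < A u v := by
  obtain ⟨w⟩ := hconn.preconnected a b
  obtain ⟨u, v, hadj, hu, hv⟩ := walk_cross P w ha hb
  exact ⟨u, v, hu, hv, (show u ≠ v ∧ 0 < A u v ∧ 0 < A v u from hadj).2.1⟩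

lemma nd_any_edge (hN : 2 ≤ N) (hconn : (uGraph A).Connected) :
    ∃ u v : Fin N, 0 < A u v := by
  have h0 : (⟨1, by omega⟩ : Fin N) ≠ ⟨0, by omega⟩ := by
    intro h
    have := congrArg Fin.val h
    simp at this
  obtain ⟨u, v, -, -, huv⟩ := nd_cross hconn (P := fun w => w = ⟨0, by omega⟩) rfl h0
  exact ⟨u, v, huv⟩

def ndCnt (j : Fin N) (c : Fin N → Fin N) : ℕ :=
  (Finset.univ.filter (fun v => c v = j)).card

lemma ndCnt_le (j : Fin N) (c : Fin N → Fin N) : ndCnt j c ≤ N := by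
  have := Finset.card_filter_le (Finset.univ : Finset (Fin N)) (fun v => c v = j)
  simpa [ndCnt] using this

lemma ndCnt_update {j : Fin N} {c : Fin N → Fin N} {v : Fin N} (hv : c v ≠ j) :
    ndCnt j (Function.update c v j) = ndCnt j c + 1 := by
  have hset : Finset.univ.filter (fun w => Function.update c v j w = j)
      = insert v (Finset.univ.filter (fun w => c w = j)) := by
    ext w
    simp only [Finset.mem_filter, Finset.mem_univ, true_and, Finset.mem_insert,
      Function.update_apply]
    by_cases hw : w = v <;> simp [hw]
  rw [ndCnt, hset, Finset.card_insert_of_notMem (by simp [hv]), ndCnt]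

lemma ndCnt_eq_N {j : Fin N} {c : Fin N → Fin N} (h : ndCnt j c = N) : ∀ v, c v = j := by
  have hsub : Finset.univ.filter (fun v => c v = j) = Finset.univ :=
    Finset.eq_univ_of_card _ (h.trans (Fintype.card_fin N).symm)
  intro v
  have hv : v ∈ Finset.univ.filter (fun v => c v = j) := by rw [hsub]; exact Finset.mem_univ v
  exact (Finset.mem_filter.1 hv).2

lemma ndCnt_pos_of {j : Fin N} {c : Fin N → Fin N} {a : Fin N} (ha : c a = j) :
    1 ≤ ndCnt j c :=
  Finset.card_pos.2 ⟨a, Finset.mem_filter.2 ⟨Finset.mem_univ a, ha⟩⟩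

end graph

section grow
variable {N : ℕ}

lemma nd_grow (hN : 2 ≤ N) (A : Matrix (Fin N) (Fin N) ℝ)
    (hnn : ∀ u v, 0 ≤ A u v) (hdeg : ∀ u, 0 < wdeg A u) (hconn : (uGraph A).Connected)
    (M : ℝ) (j : Fin N) :
    ∀ (k : ℕ) (f : (Fin N → Fin N) → ℝ), (∀ d, f d ≤ M) → ∀ (c : Fin N → Fin N),
      (ndStep A)^[k] f c = M → 1 ≤ ndCnt j c →
      ∃ c', f c' = M ∧ min (ndCnt j c + k) N ≤ ndCnt j c' := by
  have hN0 : 0 < N := by omega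
  intro k
  induction k with
  | zero =>
      intro f hf c hc hcnt
      exact ⟨c, hc, by rw [add_zero]; exact min_le_left _ _⟩
  | succ k ih =>
      intro f hf c hc hcnt
      rw [Function.iterate_succ_apply'] at hc
      have hb : ∀ d, (ndStep A)^[k] f d ≤ M := fun d => ndStep_iter_le A hN0 hnn hdeg hf k d
      by_cases hfull : ndCnt j c = N
      · have hcj : ∀ v, c v = j := ndCnt_eq_N hfull
        obtain ⟨u, v, huv⟩ := nd_any_edge hN hconn
        have hc' := ndStep_eq_prop A hN0 hnn hdeg hb hc huv
        have hupd : Function.update c v (c u) = c := by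
          rw [hcj u, ← hcj v, Function.update_eq_self]
        rw [hupd] at hc'
        obtain ⟨c', hfc', hcnt'⟩ := ih _ hf c hc' hcnt
        exact ⟨c', hfc', by omega⟩
      · obtain ⟨a, hafilt⟩ := Finset.card_pos.1 hcnt
        have ha : c a = j := (Finset.mem_filter.1 hafilt).2
        obtain ⟨b, hbne⟩ : ∃ b, c b ≠ j := by
          by_contra h
          push_neg at h
          exact hfull (le_antisymm (ndCnt_le j c)
            (by
              have : (Finset.univ.filter (fun v => c v = j)) = Finset.univ :=
                Finset.filter_true_of_mem (fun v _ => h v)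
              rw [ndCnt, this]; simp))
        obtain ⟨u, v, hu, hv, huv⟩ := nd_cross hconn (P := fun w => c w = j) ha hbne
        have hc' := ndStep_eq_prop A hN0 hnn hdeg hb hc huv
        rw [hu] at hc'
        have hcnt2 : ndCnt j (Function.update c v j) = ndCnt j c + 1 := ndCnt_update hv
        obtain ⟨c', hfc', hcnt'⟩ := ih _ hf _ hc' (by omega)
        exact ⟨c', hfc', by omega⟩

lemma nd_main (hN : 2 ≤ N) (A₁ A₂ : Matrix (Fin N) (Fin N) ℝ)
    (hnn₁ : ∀ u v, 0 ≤ A₁ u v) (hnn₂ : ∀ u v, 0 ≤ A₂ u v)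
    (hdeg₁ : ∀ u, 0 < wdeg A₁ u) (hdeg₂ : ∀ u, 0 < wdeg A₂ u)
    (hconn₁ : (uGraph A₁).Connected) (hconn₂ : (uGraph A₂).Connected)
    (τ : ℕ) (hτ : 1 ≤ τ) (Y : (Fin N → Fin N) → ℝ)
    (hY : ∀ c, (ndStep A₁)^[τ] ((ndStep A₂)^[τ] Y) c = Y c)
    (b : ℝ) (hconst : ∀ j : Fin N, Y (fun _ => j) = b) :
    ∀ c, Y c ≤ b := by
  have hN0 : 0 < N := by omega
  have hne : (Finset.univ : Finset (Fin N → Fin N)).Nonempty := ⟨fun i => i, Finset.mem_univ _⟩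
  obtain ⟨c0, -, hc0⟩ := Finset.exists_max_image Finset.univ Y hne
  set M := Y c0 with hM
  have hYle : ∀ d, Y d ≤ M := fun d => hc0 d (Finset.mem_univ d)
  have hblock : ∀ (j : Fin N) (c), Y c = M → 1 ≤ ndCnt j c →
      ∃ c', Y c' = M ∧ min (ndCnt j c + 1) N ≤ ndCnt j c' ∧ 1 ≤ ndCnt j c' := by
    intro j c hc hcnt
    have hmid : ∀ d, (ndStep A₂)^[τ] Y d ≤ M :=
      fun d => ndStep_iter_le A₂ hN0 hnn₂ hdeg₂ hYle τ d
    obtain ⟨c1, hc1, hcnt1⟩ := nd_grow hN A₁ hnn₁ hdeg₁ hconn₁ M j τ _ hmid c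
      ((hY c).trans hc) hcnt
    have h1 : 1 ≤ ndCnt j c1 := by omega
    obtain ⟨c2, hc2, hcnt2⟩ := nd_grow hN A₂ hnn₂ hdeg₂ hconn₂ M j τ Y hYle c1 hc1 h1
    exact ⟨c2, hc2, by omega, by omega⟩
  have hiter : ∀ (n : ℕ) (j : Fin N) (c), Y c = M → 1 ≤ ndCnt j c →
      N ≤ ndCnt j c + n → ∃ c', Y c' = M ∧ ndCnt j c' = N := by
    intro n
    induction n with
    | zero =>
        intro j c hc h1 hn
        exact ⟨c, hc, le_antisymm (ndCnt_le j c) (by omega)⟩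
    | succ n ih =>
        intro j c hc h1 hn
        obtain ⟨c1, hc1, hg, h1'⟩ := hblock j c hc h1
        exact ih j c1 hc1 h1' (by omega)
  intro c
  set j := c0 (⟨0, hN0⟩ : Fin N) with hj
  have h1 : 1 ≤ ndCnt j c0 := ndCnt_pos_of rfl
  obtain ⟨c', hc', hcN⟩ := hiter N j c0 rfl h1 (by omega)
  have hcj : c' = fun _ => j := funext (ndCnt_eq_N hcN)
  have hMb : M = b := by rw [← hc', hcj, hconst j]
  exact hMb ▸ hYle c

end grow

/-- Neutral drift theorem for switching networks: at fitness `r = 1`, the fixation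
probability of a single mutant placed on a uniformly random node of the switching network
`(G₁, G₂, τ)` equals `1/N`. -/
theorem neutral_drift_switching (N : ℕ) (hN : 2 ≤ N)
    (A₁ A₂ : Matrix (Fin N) (Fin N) ℝ)
    (hsym₁ : ∀ u v, A₁ u v = A₁ v u) (hsym₂ : ∀ u v, A₂ u v = A₂ v u)
    (hnn₁ : ∀ u v, 0 ≤ A₁ u v) (hnn₂ : ∀ u v, 0 ≤ A₂ u v)
    (hdiag₁ : ∀ u, A₁ u u = 0) (hdiag₂ : ∀ u, A₂ u u = 0)
    (hdeg₁ : ∀ u, 0 < wdeg A₁ u) (hdeg₂ : ∀ u, 0 < wdeg A₂ u)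
    (hconn₁ : (uGraph A₁).Connected) (hconn₂ : (uGraph A₂).Connected)
    (τ : ℕ) (hτ : 1 ≤ τ)
    (x : (Fin N → Bool) → ℝ)
    (hx0 : x (fun _ => false) = 0) (hx1 : x (fun _ => true) = 1)
    (hfix : x = ((bdT A₁ 1) ^ τ * (bdT A₂ 1) ^ τ).mulVec x) :
    (∑ i : Fin N, x (fun v => decide (v = i))) = 1 ∧
    (1 / (N : ℝ)) * ∑ i : Fin N, x (fun v => decide (v = i)) = 1 / (N : ℝ) := by
  have hN0 : 0 < N := by omega
  have hop1 : (fun z : (Fin N → Bool) → ℝ => (bdT A₁ 1).mulVec z) = ndStep A₁ := by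
    funext z s; exact bdT_mulVec A₁ hN0 hdeg₁ z s
  have hop2 : (fun z : (Fin N → Bool) → ℝ => (bdT A₂ 1).mulVec z) = ndStep A₂ := by
    funext z s; exact bdT_mulVec A₂ hN0 hdeg₂ z s
  have hx : x = (ndStep A₁)^[τ] ((ndStep A₂)^[τ] x) := by
    calc x = ((bdT A₁ 1) ^ τ * (bdT A₂ 1) ^ τ).mulVec x := hfix
    _ = ((bdT A₁ 1) ^ τ).mulVec (((bdT A₂ 1) ^ τ).mulVec x) :=
        (Matrix.mulVec_mulVec _ _ _).symm
    _ = (ndStep A₁)^[τ] ((ndStep A₂)^[τ] x) := by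
        rw [pow_mulVec, pow_mulVec, hop1, hop2]
  set X : (Fin N → Fin N) → ℝ := ndLift x with hX
  have hfixX : ∀ c, (ndStep A₁)^[τ] ((ndStep A₂)^[τ] X) c = X c := by
    intro c
    rw [hX, ndIter_lift, ndIter_lift, ← hx]
  have hconstX : ∀ j : Fin N, X (fun _ => j) = 1 := by
    intro j
    show ∑ i, x (ndPi i (fun _ => j)) = 1
    rw [Finset.sum_eq_single j]
    · have hpj : ndPi j (fun _ => j) = fun _ => true := funext fun v => by simp [ndPi]
      rw [hpj, hx1]
    · intro i _ hij
      have hpi : ndPi i (fun _ => j) = fun _ => false := funext fun v => by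
        simp only [ndPi, decide_eq_false_iff_not]
        exact fun h => hij h.symm
      rw [hpi, hx0]
    · intro h; exact absurd (Finset.mem_univ j) h
  have hub : ∀ c, X c ≤ 1 :=
    nd_main hN A₁ A₂ hnn₁ hnn₂ hdeg₁ hdeg₂ hconn₁ hconn₂ τ hτ X hfixX 1 hconstX
  have hfixX' : ∀ c, (ndStep A₁)^[τ] ((ndStep A₂)^[τ] (fun c => - X c)) c = - X c := by
    intro c
    rw [ndIter_neg A₂ X τ, ndIter_neg A₁ _ τ]
    show -(ndStep A₁)^[τ] ((ndStep A₂)^[τ] X) c = - X c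
    rw [hfixX c]
  have hlb : ∀ c, - X c ≤ -1 :=
    nd_main hN A₁ A₂ hnn₁ hnn₂ hdeg₁ hdeg₂ hconn₁ hconn₂ τ hτ (fun c => - X c) hfixX'
      (-1) (fun j => by show - X (fun _ => j) = -1; rw [hconstX j])
  have hid : X (fun v => v) = ∑ i : Fin N, x (fun v => decide (v = i)) := rfl
  have h1 : ∑ i : Fin N, x (fun v => decide (v = i)) = 1 := by
    have hA := hub (fun v => v)
    have hB := hlb (fun v => v)
    rw [hid] at hA hB
    linarith
  exact ⟨h1, by rw [h1, mul_one]⟩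
end

section
/- Let N ≥ 2, let A be a symmetric N×N real matrix with nonnegative entries and zero diagonal such that all weighted degrees are equal, i.e., w(u) = Σ_v A(u,v) = w > 0 for every node u, and let r > 0. Let T = T(A,r) be the birth-death transition matrix on {0,1}^N. Then for every state s with 1 ≤ m(s) ≤ N − 1 (where m(s) is the number of mutant nodes in s), the total probability of gaining a mutant equals r times the total probability of losing a mutant: Σ_{s' : m(s') = m(s) + 1} T(s,s') = r · Σ_{s' : m(s') = m(s) − 1} T(s,s'). -/
open Finset
lemma mCount_update_true {N : ℕ} (s : Fin N → Bool) (v : Fin N) (h : s v = false) :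
    mCount (Function.update s v true) = mCount s + 1 := by
  unfold mCount
  have : Finset.univ.filter (fun u => Function.update s v true u = true)
      = insert v (Finset.univ.filter (fun u => s u = true)) := by
    ext u
    by_cases hu : u = v <;> simp [Function.update, hu]
  rw [this, Finset.card_insert_of_notMem (by simp [h])]

lemma mCount_update_false {N : ℕ} (s : Fin N → Bool) (v : Fin N) (h : s v = true) :
    mCount (Function.update s v false) = mCount s - 1 := by
  unfold mCount
  have : Finset.univ.filter (fun u => Function.update s v false u = true)
      = (Finset.univ.filter (fun u => s u = true)).erase v := by
    ext u
    by_cases hu : u = v <;> simp [Function.update, hu]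
  rw [this, Finset.card_erase_of_mem (by simp [h])]

lemma choose_eq {N : ℕ} {s s' : Fin N → Bool} {v : Fin N}
    (hv : s v ≠ s' v) (hall : ∀ u, u ≠ v → s u = s' u)
    (h : ∃ v : Fin N, s v ≠ s' v ∧ ∀ u : Fin N, u ≠ v → s u = s' u) :
    h.choose = v := by
  by_contra hne
  exact h.choose_spec.1 (hall _ hne)

lemma bdOff_update {N : ℕ} (A : Matrix (Fin N) (Fin N) ℝ) (r : ℝ)
    (s : Fin N → Bool) (v : Fin N) :
    bdOff A r s (Function.update s v (!s v)) =
      if s v = false then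
        (r / (r * (mCount s : ℝ) + ((N : ℝ) - (mCount s : ℝ)))) *
          ∑ u ∈ Finset.univ.filter (fun u => s u = true), A u v / wdeg A u
      else
        (1 / (r * (mCount s : ℝ) + ((N : ℝ) - (mCount s : ℝ)))) *
          ∑ u ∈ Finset.univ.filter (fun u => s u = false), A u v / wdeg A u := by
  have hex : ∃ v' : Fin N, s v' ≠ Function.update s v (!s v) v' ∧
      ∀ u, u ≠ v' → s u = Function.update s v (!s v) u :=
    ⟨v, by simp, fun u hu => by simp [Function.update, hu]⟩
  rw [bdOff, dif_pos hex,
    choose_eq (v := v) (by simp) (fun u hu => by simp [Function.update, hu]) hex]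

lemma sum_up {N : ℕ} (A : Matrix (Fin N) (Fin N) ℝ) (r : ℝ)
    (s : Fin N → Bool) (h1 : 1 ≤ mCount s) :
    ∑ s' ∈ Finset.univ.filter (fun s' : Fin N → Bool => mCount s' = mCount s + 1),
        bdOff A r s s'
      = ∑ v ∈ Finset.univ.filter (fun v => s v = false),
          bdOff A r s (Function.update s v true) := by
  have hinj : ∀ x ∈ Finset.univ.filter (fun v => s v = false), ∀ y ∈ Finset.univ.filter (fun v => s v = false), Function.update s x true = Function.update s y true → x = y := by
    intro x hx y hy h
    simp only [mem_filter, mem_univ, true_and] at hx hy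
    by_contra hne
    have := congrFun h y
    simp [Function.update, Ne.symm hne, hy] at this
  rw [← Finset.sum_image hinj]
  refine (Finset.sum_subset ?sub ?zero).symm
  case sub =>
    intro s' hs'
    simp only [mem_image, mem_filter, mem_univ, true_and] at hs' ⊢
    obtain ⟨v, hv, rfl⟩ := hs'
    exact mCount_update_true s v hv
  case zero =>
    intro s' hf hni
    simp only [mem_filter, mem_univ, true_and] at hf
    by_cases hex : ∃ v : Fin N, s v ≠ s' v ∧ ∀ u : Fin N, u ≠ v → s u = s' u
    · exfalso
      obtain ⟨v₀, hne, hall⟩ := hex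
      have hval : s' v₀ = !s v₀ := by
        revert hne; cases hs : s v₀ <;> cases hs' : s' v₀ <;> simp
      have hs' : s' = Function.update s v₀ (!s v₀) := by
        funext u
        by_cases hu : u = v₀
        · subst hu; simp [Function.update, hval]
        · simp [Function.update, hu, (hall u hu).symm]
      cases hb : s v₀ with
      | false =>
        apply hni
        simp only [mem_image, mem_filter, mem_univ, true_and]
        exact ⟨v₀, hb, by rw [hs', hb]; simp⟩
      | true =>
        rw [hs', hb] at hf
        have := mCount_update_false s v₀ hb
        simp only [Bool.not_true] at hf
        omega
    · rw [bdOff, dif_neg hex]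

lemma sum_down {N : ℕ} (A : Matrix (Fin N) (Fin N) ℝ) (r : ℝ)
    (s : Fin N → Bool) (h1 : 1 ≤ mCount s) :
    ∑ s' ∈ Finset.univ.filter (fun s' : Fin N → Bool => mCount s' = mCount s - 1),
        bdOff A r s s'
      = ∑ v ∈ Finset.univ.filter (fun v => s v = true),
          bdOff A r s (Function.update s v false) := by
  have hinj : ∀ x ∈ Finset.univ.filter (fun v => s v = true), ∀ y ∈ Finset.univ.filter (fun v => s v = true), Function.update s x false = Function.update s y false → x = y := by
    intro x hx y hy h
    simp only [mem_filter, mem_univ, true_and] at hx hy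
    by_contra hne
    have := congrFun h y
    simp [Function.update, Ne.symm hne, hy] at this
  rw [← Finset.sum_image hinj]
  refine (Finset.sum_subset ?sub ?zero).symm
  case sub =>
    intro s' hs'
    simp only [mem_image, mem_filter, mem_univ, true_and] at hs' ⊢
    obtain ⟨v, hv, rfl⟩ := hs'
    exact mCount_update_false s v hv
  case zero =>
    intro s' hf hni
    simp only [mem_filter, mem_univ, true_and] at hf
    by_cases hex : ∃ v : Fin N, s v ≠ s' v ∧ ∀ u : Fin N, u ≠ v → s u = s' u
    · exfalso
      obtain ⟨v₀, hne, hall⟩ := hex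
      have hval : s' v₀ = !s v₀ := by
        revert hne; cases hs : s v₀ <;> cases hs' : s' v₀ <;> simp
      have hs' : s' = Function.update s v₀ (!s v₀) := by
        funext u
        by_cases hu : u = v₀
        · subst hu; simp [Function.update, hval]
        · simp [Function.update, hu, (hall u hu).symm]
      cases hb : s v₀ with
      | true =>
        apply hni
        simp only [mem_image, mem_filter, mem_univ, true_and]
        exact ⟨v₀, hb, by rw [hs', hb]; simp⟩
      | false =>
        rw [hs', hb] at hf
        have := mCount_update_true s v₀ hb
        simp only [Bool.not_false] at hf
        omega
    · rw [bdOff, dif_neg hex]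

/-- On a weighted network with all weighted degrees equal (an isothermal network), for any
state with `1 ≤ m(s) ≤ N - 1` mutants, the total probability of gaining a mutant equals `r`
times the total probability of losing a mutant. -/
theorem isothermal_up_down_ratio (N : ℕ) (hN : 2 ≤ N)
    (A : Matrix (Fin N) (Fin N) ℝ)
    (hsym : ∀ u v, A u v = A v u)
    (hnn : ∀ u v, 0 ≤ A u v)
    (hdiag : ∀ u, A u u = 0)
    (w : ℝ) (hw : 0 < w) (hreg : ∀ u, wdeg A u = w)
    (r : ℝ) (hr : 0 < r) :
    ∀ s : Fin N → Bool, 1 ≤ mCount s → mCount s ≤ N - 1 →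
      ∑ s' ∈ Finset.univ.filter (fun s' : Fin N → Bool => mCount s' = mCount s + 1),
          bdT A r s s' =
        r * ∑ s' ∈ Finset.univ.filter (fun s' : Fin N → Bool => mCount s' = mCount s - 1),
          bdT A r s s' := by
  intro s hm1 hm2
  have hup : ∀ s' ∈ Finset.univ.filter (fun s' : Fin N → Bool => mCount s' = mCount s + 1),
      bdT A r s s' = bdOff A r s s' := by
    intro s' hs'
    simp only [Finset.mem_filter, Finset.mem_univ, true_and] at hs'
    rw [bdT, if_neg]
    intro h; rw [h] at hs'; omega
  have hdown : ∀ s' ∈ Finset.univ.filter (fun s' : Fin N → Bool => mCount s' = mCount s - 1),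
      bdT A r s s' = bdOff A r s s' := by
    intro s' hs'
    simp only [Finset.mem_filter, Finset.mem_univ, true_and] at hs'
    rw [bdT, if_neg]
    intro h; rw [h] at hs'; omega
  rw [Finset.sum_congr rfl hup, Finset.sum_congr rfl hdown,
    sum_up A r s hm1, sum_down A r s hm1]
  have e1 : ∀ v ∈ Finset.univ.filter (fun v => s v = false),
      bdOff A r s (Function.update s v true) =
        (r / (r * (mCount s : ℝ) + ((N : ℝ) - (mCount s : ℝ)))) *
          ∑ u ∈ Finset.univ.filter (fun u => s u = true), A u v / w := by
    intro v hv
    simp only [Finset.mem_filter, Finset.mem_univ, true_and] at hv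
    have ht : Function.update s v true = Function.update s v (!s v) := by rw [hv]; rfl
    rw [ht, bdOff_update, if_pos hv]
    simp only [hreg]
  have e2 : ∀ v ∈ Finset.univ.filter (fun v => s v = true),
      bdOff A r s (Function.update s v false) =
        (1 / (r * (mCount s : ℝ) + ((N : ℝ) - (mCount s : ℝ)))) *
          ∑ u ∈ Finset.univ.filter (fun u => s u = false), A u v / w := by
    intro v hv
    simp only [Finset.mem_filter, Finset.mem_univ, true_and] at hv
    have ht : Function.update s v false = Function.update s v (!s v) := by rw [hv]; rfl
    rw [ht, bdOff_update, if_neg (by rw [hv]; simp)]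
    simp only [hreg]
  rw [Finset.sum_congr rfl e1, Finset.sum_congr rfl e2,
    ← Finset.mul_sum, ← Finset.mul_sum]
  have key : ∑ v ∈ Finset.univ.filter (fun v => s v = false),
        ∑ u ∈ Finset.univ.filter (fun u => s u = true), A u v / w
      = ∑ v ∈ Finset.univ.filter (fun v => s v = true),
        ∑ u ∈ Finset.univ.filter (fun u => s u = false), A u v / w := by
    rw [Finset.sum_comm]
    refine Finset.sum_congr rfl fun v _ => Finset.sum_congr rfl fun u _ => ?_
    rw [hsym]
  rw [key]; ring
end
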